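/- arXiv:2002.04788 — 2 statements merged into one kernel-verified Lean document; each statement's English description precedes it below -/
import Mathlib

section
/- For any measurable h₀*, h₁* ∈ H, the benefit-of-splitting satisfies ε_split ≥ (1/2) max_{s∈{0,1}} E_{X∼P_s}[|h₁*(X) − h₀*(X)|] − D_TV(P₀, P₁) − (3/2)(L₀(h₀*) + L₁(h₁*)). -/
open MeasureTheory

/-- Group risk under ℓ₁ loss. -/
noncomputable def risk {X : Type*} [MeasurableSpace X]
    (P : Measure X) (y h : X → ℝ) : ℝ := ∫ x, |h x - y x| ∂P

/-- Total variation distance `sup_E |P₀(E) − P₁(E)|` over measurable sets. -/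
noncomputable def tvDist {X : Type*} [MeasurableSpace X] (P Q : Measure X) : ℝ :=
  sSup {d | ∃ E : Set X, MeasurableSet E ∧ d = |(P E).toReal - (Q E).toReal|}

/-- Benefit-of-splitting. -/
noncomputable def benefitOfSplitting {X : Type*} [MeasurableSpace X]
    (P₀ P₁ : Measure X) (y₀ y₁ : X → ℝ) (H : Set (X → ℝ)) : ℝ :=
  sInf ((fun h => max (risk P₀ y₀ h) (risk P₁ y₁ h)) '' H)
    - max (sInf (risk P₀ y₀ '' H)) (sInf (risk P₁ y₁ '' H))

/-!
Fix any `h ∈ H`. On `P₀`, the triangle inequality through `h` bounds `E|h₁ − h₀|` by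
`E|h₁ − h| + E|h − h₀|`; the second term is at most `L₀(h) + L₀(h₀)`, and the first moves to `P₁` at
cost `D_TV(P₀, P₁)` (layer cake for `[0,1]`-valued functions), where it is at most
`L₁(h₁) + L₁(h)`. With the symmetric bound on `P₁`, this gives
`max_s E_s|h₁ − h₀| ≤ 2 max_s L_s(h) + D_TV + L₀(h₀) + L₁(h₁)` for every `h ∈ H`, while the
max of the group-wise infima is at most `L₀(h₀) + L₁(h₁)`.
-/

section

variable {X : Type*} [MeasurableSpace X]

def IsMeasurableUnitValued (f : X → ℝ) : Prop :=
  Measurable f ∧ ∀ x, f x ∈ Set.Icc (0 : ℝ) 1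

namespace IsMeasurableUnitValued

variable {f g : X → ℝ}

theorem integrable (hf : IsMeasurableUnitValued f) (μ : Measure X) [IsFiniteMeasure μ] :
    Integrable f μ :=
  .of_bound hf.1.aestronglyMeasurable 1 <| ae_of_all _ fun x => by
    rw [Real.norm_eq_abs, abs_le]
    exact ⟨by linarith [(hf.2 x).1], (hf.2 x).2⟩

theorem abs_sub (hf : IsMeasurableUnitValued f) (hg : IsMeasurableUnitValued g) :
    IsMeasurableUnitValued fun x => |f x - g x| := by
  refine ⟨(hf.1.sub hg.1).abs, fun x => ⟨abs_nonneg _, ?_⟩⟩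
  obtain ⟨hf0, hf1⟩ := hf.2 x
  obtain ⟨hg0, hg1⟩ := hg.2 x
  rw [abs_le]
  constructor <;> linarith

end IsMeasurableUnitValued

section TotalVariation

variable (P Q : Measure X)

theorem tvDist_comm : tvDist P Q = tvDist Q P := by
  simp only [tvDist, abs_sub_comm (P _).toReal]

variable [IsFiniteMeasure P] [IsFiniteMeasure Q]

theorem abs_measureReal_sub_le_tvDist {E : Set X} (hE : MeasurableSet E) :
    |P.real E - Q.real E| ≤ tvDist P Q := by
  refine le_csSup ⟨P.real Set.univ + Q.real Set.univ, ?_⟩ ⟨E, hE, rfl⟩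
  rintro _ ⟨F, -, rfl⟩
  change |P.real F - Q.real F| ≤ _
  have hP : P.real F ≤ P.real Set.univ := measureReal_mono (Set.subset_univ F)
  have hQ : Q.real F ≤ Q.real Set.univ := measureReal_mono (Set.subset_univ F)
  rw [abs_le]
  have hP₀ : 0 ≤ P.real F := measureReal_nonneg
  have hQ₀ : 0 ≤ Q.real F := measureReal_nonneg
  constructor <;> linarith

theorem tvDist_nonneg : 0 ≤ tvDist P Q :=
  (abs_nonneg _).trans (abs_measureReal_sub_le_tvDist P Q MeasurableSet.empty)

/-- Layer cake: `∫ f dμ = ∫₀¹ μ {f ≥ t} dt`, and the integrands for `P` and `Q` differ by at most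
`tvDist P Q` at every level `t`. -/
theorem integral_le_integral_add_tvDist {f : X → ℝ} (hf : IsMeasurableUnitValued f) :
    ∫ x, f x ∂P ≤ ∫ x, f x ∂Q + tvDist P Q := by
  have layerCake (μ : Measure X) [IsFiniteMeasure μ] :
      ∫ x, f x ∂μ = ∫ t in Set.Ioc 0 1, μ.real {x | t ≤ f x} :=
    (hf.integrable μ).integral_eq_integral_Ioc_meas_le
      (ae_of_all _ fun x => (hf.2 x).1) (ae_of_all _ fun x => (hf.2 x).2)
  have integrableOn (μ : Measure X) [IsFiniteMeasure μ] :
      IntegrableOn (fun t => μ.real {x | t ≤ f x}) (Set.Ioc 0 1) := by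
    have hanti : Antitone fun t => μ.real {x | t ≤ f x} :=
      fun s t hst => measureReal_mono fun x hx => hst.trans hx
    refine Measure.integrableOn_of_bounded (M := μ.real Set.univ) (by simp)
      hanti.measurable.aestronglyMeasurable (ae_of_all _ fun t => ?_)
    rw [Real.norm_of_nonneg measureReal_nonneg]
    exact measureReal_mono (Set.subset_univ _)
  have levelwise : ∀ t ∈ Set.Ioc (0 : ℝ) 1,
      P.real {x | t ≤ f x} ≤ Q.real {x | t ≤ f x} + tvDist P Q := fun t _ => by
    have := abs_measureReal_sub_le_tvDist P Q (E := {x | t ≤ f x}) (hf.1 measurableSet_Ici)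
    linarith [le_abs_self (P.real {x | t ≤ f x} - Q.real {x | t ≤ f x})]
  rw [layerCake P, layerCake Q]
  calc ∫ t in Set.Ioc 0 1, P.real {x | t ≤ f x}
      ≤ ∫ t in Set.Ioc 0 1, (Q.real {x | t ≤ f x} + tvDist P Q) :=
        setIntegral_mono_on (integrableOn P) ((integrableOn Q).add (integrableOn_const (by simp)))
          measurableSet_Ioc levelwise
    _ = (∫ t in Set.Ioc 0 1, Q.real {x | t ≤ f x}) + tvDist P Q := by
        rw [integral_add (integrableOn Q) (integrableOn_const (by simp))]
        simp

end TotalVariation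

section Risk

variable {μ : Measure X}

theorem risk_nonneg (y h : X → ℝ) : 0 ≤ risk μ y h :=
  integral_nonneg fun _ => abs_nonneg _

theorem sInf_risk_image_le {y h : X → ℝ} {H : Set (X → ℝ)} (hh : h ∈ H) :
    sInf (risk μ y '' H) ≤ risk μ y h :=
  csInf_le ⟨0, by rintro _ ⟨g, -, rfl⟩; exact risk_nonneg y g⟩ ⟨h, hh, rfl⟩

theorem integral_abs_sub_le_add {f g k : X → ℝ} (hfk : Integrable (fun x => |f x - k x|) μ)
    (hkg : Integrable (fun x => |k x - g x|) μ) :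
    ∫ x, |f x - g x| ∂μ ≤ ∫ x, |f x - k x| ∂μ + ∫ x, |k x - g x| ∂μ := by
  rw [← integral_add hfk hkg]
  exact integral_mono_of_nonneg (ae_of_all _ fun _ => abs_nonneg _) (hfk.add hkg)
    (ae_of_all _ fun x => abs_sub_le (f x) (k x) (g x))

theorem integral_abs_sub_le_risk_add_risk {f g y : X → ℝ}
    (hfy : Integrable (fun x => |f x - y x|) μ) (hgy : Integrable (fun x => |g x - y x|) μ) :
    ∫ x, |f x - g x| ∂μ ≤ risk μ y f + risk μ y g := by
  have hyg : Integrable (fun x => |y x - g x|) μ := by simpa only [abs_sub_comm] using hgy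
  simpa only [risk, abs_sub_comm (y _)] using integral_abs_sub_le_add hfy hyg

end Risk

theorem integral_abs_sub_le_risks_add_tvDist (P Q : Measure X) [IsFiniteMeasure P]
    [IsFiniteMeasure Q] {y y' h g g' : X → ℝ} (hy : IsMeasurableUnitValued y)
    (hy' : IsMeasurableUnitValued y') (hh : IsMeasurableUnitValued h)
    (hg : IsMeasurableUnitValued g) (hg' : IsMeasurableUnitValued g') :
    ∫ x, |g' x - g x| ∂P ≤
      risk P y g + risk P y h + risk Q y' h + risk Q y' g' + tvDist P Q := by
  have onP : ∫ x, |h x - g x| ∂P ≤ risk P y h + risk P y g :=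
    integral_abs_sub_le_risk_add_risk ((hh.abs_sub hy).integrable P) ((hg.abs_sub hy).integrable P)
  have onQ : ∫ x, |g' x - h x| ∂Q ≤ risk Q y' g' + risk Q y' h :=
    integral_abs_sub_le_risk_add_risk ((hg'.abs_sub hy').integrable Q)
      ((hh.abs_sub hy').integrable Q)
  have shift := integral_le_integral_add_tvDist P Q (hg'.abs_sub hh)
  have split := integral_abs_sub_le_add (μ := P) ((hg'.abs_sub hh).integrable P)
    ((hh.abs_sub hg).integrable P)
  linarith

theorem max_integral_abs_sub_le (P₀ P₁ : Measure X) [IsFiniteMeasure P₀] [IsFiniteMeasure P₁]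
    {y₀ y₁ h h₀ h₁ : X → ℝ} (hy₀ : IsMeasurableUnitValued y₀) (hy₁ : IsMeasurableUnitValued y₁)
    (hh : IsMeasurableUnitValued h) (hh₀ : IsMeasurableUnitValued h₀)
    (hh₁ : IsMeasurableUnitValued h₁) :
    max (∫ x, |h₁ x - h₀ x| ∂P₀) (∫ x, |h₁ x - h₀ x| ∂P₁) ≤
      2 * max (risk P₀ y₀ h) (risk P₁ y₁ h) + tvDist P₀ P₁ +
        (risk P₀ y₀ h₀ + risk P₁ y₁ h₁) := by
  have on₀ := integral_abs_sub_le_risks_add_tvDist P₀ P₁ hy₀ hy₁ hh hh₀ hh₁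
  have on₁ := integral_abs_sub_le_risks_add_tvDist P₁ P₀ hy₁ hy₀ hh hh₁ hh₀
  rw [tvDist_comm P₁ P₀] at on₁
  simp only [abs_sub_comm (h₀ _)] at on₁
  have := le_max_left (risk P₀ y₀ h) (risk P₁ y₁ h)
  have := le_max_right (risk P₀ y₀ h) (risk P₁ y₁ h)
  exact max_le (by linarith) (by linarith)

end

theorem benefitOfSplitting_lower_bound {X : Type*} [MeasurableSpace X]
    (P₀ P₁ : Measure X) [IsProbabilityMeasure P₀] [IsProbabilityMeasure P₁]
    (y₀ y₁ : X → ℝ) (hy₀ : Measurable y₀) (hy₁ : Measurable y₁)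
    (hy₀01 : ∀ x, y₀ x ∈ Set.Icc (0:ℝ) 1) (hy₁01 : ∀ x, y₁ x ∈ Set.Icc (0:ℝ) 1)
    (H : Set (X → ℝ))
    (hHmeas : ∀ h ∈ H, Measurable h ∧ ∀ x, h x ∈ Set.Icc (0:ℝ) 1)
    (h₀ h₁ : X → ℝ) (h₀H : h₀ ∈ H) (h₁H : h₁ ∈ H) :
    benefitOfSplitting P₀ P₁ y₀ y₁ H ≥
      (1 / 2) * max (∫ x, |h₁ x - h₀ x| ∂P₀) (∫ x, |h₁ x - h₀ x| ∂P₁)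
        - tvDist P₀ P₁ - (3 / 2) * (risk P₀ y₀ h₀ + risk P₁ y₁ h₁) := by
  have sInf_max_risk_ge : (1 / 2) * max (∫ x, |h₁ x - h₀ x| ∂P₀) (∫ x, |h₁ x - h₀ x| ∂P₁)
      - (1 / 2) * tvDist P₀ P₁ - (1 / 2) * (risk P₀ y₀ h₀ + risk P₁ y₁ h₁) ≤
      sInf ((fun h => max (risk P₀ y₀ h) (risk P₁ y₁ h)) '' H) := by
    refine le_csInf (Set.Nonempty.image _ ⟨h₀, h₀H⟩) ?_
    rintro _ ⟨h, hH, rfl⟩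
    have := max_integral_abs_sub_le P₀ P₁ ⟨hy₀, hy₀01⟩ ⟨hy₁, hy₁01⟩ (hHmeas h hH)
      (hHmeas h₀ h₀H) (hHmeas h₁ h₁H)
    linarith
  have max_sInf_risk_le : max (sInf (risk P₀ y₀ '' H)) (sInf (risk P₁ y₁ '' H)) ≤
      risk P₀ y₀ h₀ + risk P₁ y₁ h₁ :=
    max_le ((sInf_risk_image_le h₀H).trans (le_add_of_nonneg_right (risk_nonneg y₁ h₁)))
      ((sInf_risk_image_le h₁H).trans (le_add_of_nonneg_left (risk_nonneg y₀ h₀)))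
  have := tvDist_nonneg P₀ P₁
  unfold benefitOfSplitting
  linarith
end

section
/- Let S take values in a finite set 𝒮, with group distributions P_s and labeling functions y_s : X → [0,1]. For any measurable classifier h : X → [0,1], max_{s∈𝒮} L_s(h) ≥ (1/(2(|𝒮|−1))) · max_{s∈𝒮} Σ_{s̄∈𝒮} ( E_{X∼P_s}[|y_s(X) − y_{s̄}(X)|] − D_TV(P_s, P_{s̄}) ). -/
/-!
For every pair of groups `s, s̄`, the triangle inequality through `h` gives
`E_{P_s}|y_s - y_s̄| ≤ L_s(h) + E_{P_s}|h - y_s̄|`, and since `|h - y_s̄|` takes values in `[0, 1]`,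
changing the measure from `P_s` to `P_s̄` costs at most `D_TV(P_s, P_s̄)`. Hence each term of the
sum is at most `L_s(h) + L_s̄(h) ≤ 2 max_s L_s(h)`; the diagonal term vanishes, which leaves
`|𝒮| - 1` terms.
-/

open MeasureTheory

section

variable {X : Type*} [MeasurableSpace X]

lemma bddAbove_tvDist_set (P Q : Measure X) [IsFiniteMeasure P] [IsFiniteMeasure Q] :
    BddAbove {d | ∃ E : Set X, MeasurableSet E ∧ d = |(P E).toReal - (Q E).toReal|} := by
  refine ⟨P.real Set.univ + Q.real Set.univ, ?_⟩
  rintro _ ⟨E, -, rfl⟩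
  calc |(P E).toReal - (Q E).toReal| ≤ |P.real E| + |Q.real E| := abs_sub _ _
    _ ≤ P.real Set.univ + Q.real Set.univ := by
      rw [abs_of_nonneg measureReal_nonneg, abs_of_nonneg measureReal_nonneg]
      exact add_le_add (measureReal_mono E.subset_univ) (measureReal_mono E.subset_univ)

lemma tvDist_self (P : Measure X) : tvDist P P = 0 := by
  have hset : {d | ∃ E : Set X, MeasurableSet E ∧ d = |(P E).toReal - (P E).toReal|} = {0} := by
    ext d
    simp only [sub_self, abs_zero, Set.mem_ofPred_eq, Set.mem_singleton_iff]
    exact ⟨fun ⟨_, _, hd⟩ => hd, fun hd => ⟨∅, MeasurableSet.empty, hd⟩⟩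
  rw [tvDist, hset, csSup_singleton]

lemma measureReal_sub_le_tvDist (P Q : Measure X) [IsFiniteMeasure P] [IsFiniteMeasure Q]
    {E : Set X} (hE : MeasurableSet E) : P.real E - Q.real E ≤ tvDist P Q :=
  (le_abs_self _).trans (le_csSup (bddAbove_tvDist_set P Q) ⟨E, hE, rfl⟩)

lemma integrableOn_measureReal_superlevel (μ : Measure X) [IsFiniteMeasure μ] (g : X → ℝ) :
    IntegrableOn (fun t : ℝ => μ.real {x | t ≤ g x}) (Set.Ioc 0 1) := by
  have hanti : Antitone fun t : ℝ => μ.real {x | t ≤ g x} :=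
    fun _ _ hst => measureReal_mono fun _ hx => hst.trans hx
  exact (hanti.locallyIntegrable.integrableOn_isCompact isCompact_Icc).mono_set
    Set.Ioc_subset_Icc_self

/-- By the layer cake formula both integrals are integrals over `t ∈ (0, 1]` of the measures of the
superlevel sets `{t ≤ g}`, and these differ by at most `tvDist P Q`. -/
lemma integral_le_integral_add_tvDist_s14 (P Q : Measure X) [IsFiniteMeasure P] [IsFiniteMeasure Q]
    {g : X → ℝ} (hg : Measurable g) (hg0 : ∀ x, 0 ≤ g x) (hg1 : ∀ x, g x ≤ 1) :
    ∫ x, g x ∂P ≤ ∫ x, g x ∂Q + tvDist P Q := by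
  have layerCake : ∀ (μ : Measure X) [IsFiniteMeasure μ],
      ∫ x, g x ∂μ = ∫ t in Set.Ioc (0 : ℝ) 1, μ.real {x | t ≤ g x} := fun μ _ =>
    (Integrable.of_bound hg.aestronglyMeasurable 1 (.of_forall fun x => by
      rw [Real.norm_of_nonneg (hg0 x)]; exact hg1 x)).integral_eq_integral_Ioc_meas_le
      (.of_forall hg0) (.of_forall hg1)
  rw [layerCake P, layerCake Q]
  calc ∫ t in Set.Ioc (0 : ℝ) 1, P.real {x | t ≤ g x}
      ≤ ∫ t in Set.Ioc (0 : ℝ) 1, (Q.real {x | t ≤ g x} + tvDist P Q) :=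
        setIntegral_mono_on (integrableOn_measureReal_superlevel P g)
          ((integrableOn_measureReal_superlevel Q g).add (integrableOn_const (by simp)))
          measurableSet_Ioc fun _ _ =>
            sub_le_iff_le_add'.mp (measureReal_sub_le_tvDist P Q (hg measurableSet_Ici))
    _ = (∫ t in Set.Ioc (0 : ℝ) 1, Q.real {x | t ≤ g x}) + tvDist P Q := by
        rw [integral_add (integrableOn_measureReal_superlevel Q g) (integrableOn_const (by simp)),
          setIntegral_const, Real.volume_real_Ioc]
        norm_num

lemma integral_abs_sub_le_risk_add_risk_add_tvDist (P Q : Measure X)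
    [IsFiniteMeasure P] [IsFiniteMeasure Q] {y z h : X → ℝ}
    (hy : Measurable y) (hz : Measurable z) (hh : Measurable h)
    (hy01 : ∀ x, y x ∈ Set.Icc (0 : ℝ) 1) (hz01 : ∀ x, z x ∈ Set.Icc (0 : ℝ) 1)
    (hh01 : ∀ x, h x ∈ Set.Icc (0 : ℝ) 1) :
    ∫ x, |y x - z x| ∂P ≤ risk P y h + risk Q z h + tvDist P Q := by
  have hdist_le_one : ∀ {f : X → ℝ}, (∀ x, f x ∈ Set.Icc (0 : ℝ) 1) → ∀ x, |h x - f x| ≤ 1 :=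
    fun hf x => abs_sub_le_of_nonneg_of_le (hh01 x).1 (hh01 x).2 (hf x).1 (hf x).2
  have hint : ∀ {f : X → ℝ}, Measurable f → (∀ x, f x ∈ Set.Icc (0 : ℝ) 1) →
      Integrable (fun x => |h x - f x|) P := fun hf hf01 =>
    .of_bound (hh.sub hf).abs.aestronglyMeasurable 1 (.of_forall fun x => by
      rw [Real.norm_eq_abs, abs_abs]; exact hdist_le_one hf01 x)
  calc ∫ x, |y x - z x| ∂P ≤ ∫ x, (|h x - y x| + |h x - z x|) ∂P :=
        integral_mono_of_nonneg (.of_forall fun _ => abs_nonneg _)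
          ((hint hy hy01).add (hint hz hz01))
          (.of_forall fun x => by
            simpa only [abs_sub_comm (y x) (h x)] using abs_sub_le (y x) (h x) (z x))
    _ = risk P y h + ∫ x, |h x - z x| ∂P := integral_add (hint hy hy01) (hint hz hz01)
    _ ≤ risk P y h + (risk Q z h + tvDist P Q) :=
        add_le_add_right (integral_le_integral_add_tvDist_s14 P Q (hh.sub hz).abs
          (fun _ => abs_nonneg _) (hdist_le_one hz01)) _
    _ = risk P y h + risk Q z h + tvDist P Q := (add_assoc _ _ _).symm

end

lemma sum_le_card_sub_one_mul_of_eq_zero {ι : Type*} [Fintype ι] {f : ι → ℝ} {i : ι} {c : ℝ}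
    (hi : f i = 0) (hf : ∀ j ≠ i, f j ≤ c) : ∑ j, f j ≤ (Fintype.card ι - 1) * c := by
  classical
  rw [← Finset.sum_erase_add _ _ (Finset.mem_univ i), hi, add_zero]
  calc ∑ j ∈ Finset.univ.erase i, f j ≤ (Finset.univ.erase i).card • c :=
        Finset.sum_le_card_nsmul _ _ _ fun j hj => hf j (Finset.ne_of_mem_erase hj)
    _ = (Fintype.card ι - 1) * c := by
        rw [nsmul_eq_mul, Finset.card_erase_of_mem (Finset.mem_univ i), Finset.card_univ,
          Nat.cast_pred (Fintype.card_pos_iff.2 ⟨i⟩)]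

theorem multi_group_blind_impossibility_general {X : Type*} [MeasurableSpace X]
    {S : Type*} [Fintype S] [Nonempty S]
    (P : S → Measure X) [∀ s, IsProbabilityMeasure (P s)]
    (y : S → X → ℝ) (hy : ∀ s, Measurable (y s))
    (hy01 : ∀ s x, y s x ∈ Set.Icc (0:ℝ) 1)
    (h : X → ℝ) (hh : Measurable h) (hh01 : ∀ x, h x ∈ Set.Icc (0:ℝ) 1) :
    (⨆ s, risk (P s) (y s) h) ≥
      (1 / (2 * (Fintype.card S - 1))) *
        ⨆ s, ∑ sbar : S,
          ((∫ x, |y s x - y sbar x| ∂(P s)) - tvDist (P s) (P sbar)) := by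
  set M := ⨆ s, risk (P s) (y s) h
  have hM : ∀ s, risk (P s) (y s) h ≤ M := le_ciSup (Finite.bddAbove_range _)
  have hM0 : 0 ≤ M := Real.iSup_nonneg fun _ => integral_nonneg fun _ => abs_nonneg _
  have hrow : ∀ s, ∑ sbar : S, ((∫ x, |y s x - y sbar x| ∂(P s)) - tvDist (P s) (P sbar)) ≤
      (Fintype.card S - 1) * (2 * M) := fun s =>
    sum_le_card_sub_one_mul_of_eq_zero (i := s) (by simp [tvDist_self]) fun sbar _ => by
      linarith [integral_abs_sub_le_risk_add_risk_add_tvDist (P s) (P sbar) (hy s) (hy sbar) hh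
        (hy01 s) (hy01 sbar) hh01, hM s, hM sbar]
  have hone_le_card : (1 : ℝ) ≤ Fintype.card S := Nat.one_le_cast.2 Fintype.card_pos
  rw [ge_iff_le, one_div_mul_eq_div]
  exact div_le_of_le_mul₀ (by linarith) hM0 ((ciSup_le hrow).trans_eq (by ring))

theorem multi_group_blind_impossibility {X : Type*} [MeasurableSpace X]
    {S : Type*} [Fintype S] [Nonempty S] (hcard : 2 ≤ Fintype.card S)
    (P : S → Measure X) [∀ s, IsProbabilityMeasure (P s)]
    (y : S → X → ℝ) (hy : ∀ s, Measurable (y s))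
    (hy01 : ∀ s x, y s x ∈ Set.Icc (0:ℝ) 1)
    (h : X → ℝ) (hh : Measurable h) (hh01 : ∀ x, h x ∈ Set.Icc (0:ℝ) 1) :
    (⨆ s, risk (P s) (y s) h) ≥
      (1 / (2 * (Fintype.card S - 1))) *
        ⨆ s, ∑ sbar : S,
          ((∫ x, |y s x - y sbar x| ∂(P s)) - tvDist (P s) (P sbar)) :=
  multi_group_blind_impossibility_general P y hy hy01 h hh hh01
end
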